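/- In the setup V = Ax ⊕ Ay with ⟨𝔭^{e-1}x, y⟩ ≠ 0 and ⟨𝔭^{e-1}x, x⟩ = ⟨𝔭^{e-1}y, y⟩ = 0, the map ay ↦ (a'x ↦ ⟨a'x, ay⟩) is an E-linear bijection from the τ-twist (Ay)^τ onto Hom_E(Ax, E). -/

import Mathlib

/-!
The adjoint relation moves scalars of `A` across the form; applied to scalars coming from `E`
it gives `σ`-semilinearity in the second slot. Every nonzero ideal of `A` is a power `𝔭 ^ k`
with `k < e`, hence contains `𝔭 ^ (e - 1)`: for `a ≠ 0` this writes the witness `a₀` of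
`B (𝔭 ^ (e - 1) x) y ≠ 0` as `c * τ a`, so `B (c • x) (a • y) = B (a₀ • x) y ≠ 0`, which is
injectivity. As `A x ≅ A ≅ A y` over `E`, the twist `(A y)^τ` and `Hom_E (A x, E)` have the same
finite dimension, and an injective `σ`-semilinear map between them is onto.
-/

open Module

theorem smul_right_eq_of_adjoint {E A V : Type*} [CommSemiring E] [Semiring A] [Algebra E A]
    [AddCommMonoid V] [Module A V] [Module E V] [IsScalarTower E A V]
    {τ : A → A} {σ : E → E} (hcompat : ∀ c : E, τ (algebraMap E A c) = algebraMap E A (σ c))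
    {B : V → V → E} (hBE : ∀ (c : E) (u w : V), B (c • u) w = c * B u w)
    (hadj : ∀ (a : A) (v w : V), B v (a • w) = B (τ a • v) w) (c : E) (u w : V) :
    B u (c • w) = σ c * B u w := by
  rw [← algebraMap_smul A c w, hadj, hcompat, algebraMap_smul, hBE]

theorem Ideal.pow_pred_le_of_ne_bot {A : Type*} [CommSemiring A] {𝔭 : Ideal A} {e : ℕ}
    (hideals : ∀ I : Ideal A, ∃ k : ℕ, I = 𝔭 ^ k) (hnil : 𝔭 ^ e = ⊥) {I : Ideal A}
    (hI : I ≠ ⊥) : 𝔭 ^ (e - 1) ≤ I := by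
  obtain ⟨k, rfl⟩ := hideals I
  refine Ideal.pow_le_pow_right (not_lt.mp fun hk => hI ?_)
  exact le_bot_iff.mp (hnil ▸ Ideal.pow_le_pow_right (by omega))

theorem eq_zero_of_forall_pairing_eq_zero {E A V : Type*} [Zero E] [CommSemiring A]
    [AddCommMonoid V] [Module A V] {τ : A ≃+* A} {B : V → V → E}
    (hadj : ∀ (a : A) (v w : V), B v (a • w) = B (τ a • v) w)
    {𝔭 : Ideal A} {e : ℕ} (hideals : ∀ I : Ideal A, ∃ k : ℕ, I = 𝔭 ^ k) (hnil : 𝔭 ^ e = ⊥)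
    {x y : V} (hxy : ∃ a ∈ 𝔭 ^ (e - 1), B (a • x) y ≠ 0)
    {w : V} (hw : w ∈ A ∙ y) (h : ∀ u ∈ A ∙ x, B u w = 0) : w = 0 := by
  obtain ⟨a₀, ha₀, hB⟩ := hxy
  obtain ⟨a, rfl⟩ := Submodule.mem_span_singleton.mp hw
  suffices a = 0 by rw [this, zero_smul]
  by_contra ha
  have hτa : Ideal.span {τ a} ≠ ⊥ := by simpa using τ.map_ne_zero_iff.mpr ha
  obtain ⟨c, rfl⟩ :=
    Ideal.mem_span_singleton'.mp (Ideal.pow_pred_le_of_ne_bot hideals hnil hτa ha₀)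
  apply hB
  rw [mul_comm, mul_smul, ← hadj]
  exact h _ (Submodule.smul_mem _ c (Submodule.mem_span_singleton_self x))

theorem LinearMap.surjective_of_injective_of_finrank_eq {K K' M N : Type*} [DivisionRing K]
    [DivisionRing K'] [AddCommGroup M] [AddCommGroup N] [Module K M] [Module K' N]
    [FiniteDimensional K' N] {σ : K →+* K'} [RingHomSurjective σ] {f : M →ₛₗ[σ] N}
    (hf : Function.Injective f) (h : finrank K M = finrank K' N) : Function.Surjective f := by
  have hle : finrank K M ≤ finrank K' f.range := by
    simpa only [Cardinal.toNat_lift] using! Cardinal.toNat_le_toNat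
      (lift_rank_le_of_surjective_injective (σ : K → K') (f.rangeRestrict : M →+ f.range)
        σ.surjective (f.injective_rangeRestrict_iff.mpr hf) f.rangeRestrict.map_smulₛₗ)
      (Cardinal.lift_lt_aleph0.mpr (rank_lt_aleph0 K' f.range))
  exact range_eq_top.mp (Submodule.eq_top_of_finrank_eq
    (le_antisymm (Submodule.finrank_le _) (h ▸ hle)))

theorem finrank_span_singleton_eq_finrank {E A V : Type*} [Field E] [CommRing A] [Algebra E A]
    [AddCommGroup V] [Module A V] [Module E V] [IsScalarTower E A V] {x : V}
    (hx : ∀ a : A, a • x = 0 → a = 0) : finrank E (A ∙ x) = finrank E A := by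
  have hinj : Function.Injective (LinearMap.toSpanSingleton A V x) :=
    (injective_iff_map_eq_zero _).mpr hx
  exact ((LinearEquiv.ofInjective _ hinj).trans
    (LinearEquiv.ofEq _ _ (LinearMap.span_singleton_eq_range A V x).symm)).restrictScalars E
    |>.finrank_eq.symm

theorem exists_eq_pairing_of_finrank_eq {K V : Type*} [Field K] [AddCommGroup V] [Module K V]
    {σ : K →+* K} [RingHomSurjective σ] (B : V →ₗ[K] V →ₛₗ[σ] K) {P Q : Submodule K V}
    [FiniteDimensional K P] (hrank : finrank K Q = finrank K P)
    (hB : ∀ w ∈ Q, (∀ u ∈ P, B u w = 0) → w = 0) (φ : Dual K P) :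
    ∃ w : Q, ∀ u : P, B u w = φ u := by
  let T : Q →ₛₗ[σ] Dual K P := P.subtype.dualMap ∘ₛₗ B.flip.domRestrict Q
  have hT : Function.Injective T := (injective_iff_map_eq_zero T).mpr fun w hw =>
    Subtype.ext (hB w w.2 fun u hu => LinearMap.congr_fun hw ⟨u, hu⟩)
  exact LinearMap.surjective_of_injective_of_finrank_eq hT
    (hrank.trans Subspace.dual_finrank_eq.symm) φ |>.imp fun _ => LinearMap.congr_fun

theorem stmt_9_general {E A V : Type*} [Field E] [CommRing A] [Algebra E A]
    [AddCommGroup V] [Module A V] [Module E V] [IsScalarTower E A V]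
    [FiniteDimensional E V]
    (τ : A ≃+* A)
    (σ : E ≃+* E)
    (hcompat : ∀ c : E, τ (algebraMap E A c) = algebraMap E A (σ c))
    (𝔭 : Ideal A) (e : ℕ)
    (hideals : ∀ I : Ideal A, ∃ k : ℕ, I = 𝔭 ^ k)
    (hnil : 𝔭 ^ e = ⊥)
    (B : V → V → E)
    (hB₁ : ∀ u v w, B (u + v) w = B u w + B v w)
    (hB₂ : ∀ u v w, B u (v + w) = B u v + B u w)
    (hBE : ∀ (c : E) (u w : V), B (c • u) w = c * B u w)
    (hadj : ∀ (a : A) (v w : V), B v (a • w) = B (τ a • v) w)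
    (x y : V)
    (hx : ∀ a : A, a • x = 0 → a = 0) (hy : ∀ a : A, a • y = 0 → a = 0)
    (hxy : ∃ a ∈ 𝔭 ^ (e - 1), B (a • x) y ≠ 0) :
    (∀ (c : E) (u w : V), B u (c • w) = σ c * B u w) ∧
    (∀ w₁ w₂ : Submodule.span A ({y} : Set V),
      (∀ u : Submodule.span A ({x} : Set V), B (u : V) (w₁ : V) = B (u : V) (w₂ : V)) →
        w₁ = w₂) ∧
    (∀ φ : Submodule.span A ({x} : Set V) →ₗ[E] E,
      ∃ w : Submodule.span A ({y} : Set V),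
        ∀ u : Submodule.span A ({x} : Set V), B (u : V) (w : V) = φ u) := by
  have hsemi := smul_right_eq_of_adjoint hcompat hBE hadj
  let Bₛ : V →ₗ[E] V →ₛₗ[(σ : E →+* E)] E := .mk₂'ₛₗ _ _ B hB₁ hBE hB₂ hsemi
  have hnondeg : ∀ w ∈ A ∙ y, (∀ u ∈ A ∙ x, Bₛ u w = 0) → w = 0 :=
    fun _ => eq_zero_of_forall_pairing_eq_zero hadj hideals hnil hxy
  refine ⟨hsemi, fun w₁ w₂ h => Subtype.ext (sub_eq_zero.mp ?_), fun φ => ?_⟩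
  · exact hnondeg _ (sub_mem w₁.2 w₂.2) fun u hu => by
      rw [map_sub, sub_eq_zero]
      exact h ⟨u, hu⟩
  · exact exists_eq_pairing_of_finrank_eq Bₛ (P := (A ∙ x).restrictScalars E)
      (Q := (A ∙ y).restrictScalars E)
      ((finrank_span_singleton_eq_finrank hy).trans (finrank_span_singleton_eq_finrank hx).symm)
      hnondeg φ

/-- In the setup `V = Ax ⊕ Ay` with `B (𝔭^{e-1} x) y ≠ 0` and
`B (𝔭^{e-1} x) x = B (𝔭^{e-1} y) y = 0`, the map `a y ↦ (a' x ↦ B (a' x) (a y))`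
is an `E`-linear bijection from the `τ`-twist `(A y)^τ` onto `Hom_E (A x, E)`:
it is `σ`-semilinear in `a y`, injective, and hits every `E`-linear functional
on `A x`. -/
theorem stmt_9 {E A V : Type*} [Field E] [CommRing A] [Algebra E A]
    [AddCommGroup V] [Module A V] [Module E V] [IsScalarTower E A V]
    [FiniteDimensional E V]
    (τ : A ≃+* A) (hτ : ∀ a, τ (τ a) = a)
    (σ : E ≃+* E) (hσ : ∀ c, σ (σ c) = c)
    (hcompat : ∀ c : E, τ (algebraMap E A c) = algebraMap E A (σ c))
    (𝔭 : Ideal A) (e : ℕ) (he : 0 < e)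
    (hideals : ∀ I : Ideal A, ∃ k : ℕ, I = 𝔭 ^ k)
    (hchain : ∀ k : ℕ, k < e → 𝔭 ^ (k + 1) < 𝔭 ^ k)
    (hnil : 𝔭 ^ e = ⊥)
    (hτ𝔭 : ∀ a ∈ 𝔭, τ a ∈ 𝔭)
    (ε : E) (hε : ε = 1 ∨ ε = -1)
    (B : V → V → E)
    (hB₁ : ∀ u v w, B (u + v) w = B u w + B v w)
    (hB₂ : ∀ u v w, B u (v + w) = B u v + B u w)
    (hBE : ∀ (c : E) (u w : V), B (c • u) w = c * B u w)
    (hherm : ∀ v w, B w v = ε * σ (B v w))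
    (hadj : ∀ (a : A) (v w : V), B v (a • w) = B (τ a • v) w)
    (x y : V)
    (hx : ∀ a : A, a • x = 0 → a = 0) (hy : ∀ a : A, a • y = 0 → a = 0)
    (hxy : ∃ a ∈ 𝔭 ^ (e - 1), B (a • x) y ≠ 0)
    (hxx : ∀ a ∈ 𝔭 ^ (e - 1), B (a • x) x = 0)
    (hyy : ∀ a ∈ 𝔭 ^ (e - 1), B (a • y) y = 0)
    (hsum : Submodule.span A ({x} : Set V) ⊔ Submodule.span A ({y} : Set V) = ⊤)
    (hmeet : Submodule.span A ({x} : Set V) ⊓ Submodule.span A ({y} : Set V) = ⊥) :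
    (∀ (c : E) (u w : V), B u (c • w) = σ c * B u w) ∧
    (∀ w₁ w₂ : Submodule.span A ({y} : Set V),
      (∀ u : Submodule.span A ({x} : Set V), B (u : V) (w₁ : V) = B (u : V) (w₂ : V)) →
        w₁ = w₂) ∧
    (∀ φ : Submodule.span A ({x} : Set V) →ₗ[E] E,
      ∃ w : Submodule.span A ({y} : Set V),
        ∀ u : Submodule.span A ({x} : Set V), B (u : V) (w : V) = φ u) :=
  stmt_9_general τ σ hcompat 𝔭 e hideals hnil B hB₁ hB₂ hBE hadj x y hx hy hxy
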